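/- Every maximal commuting Pauli class is closed under multiplication up to phase: if C is a maximal commuting Pauli class in dimension d = 2ⁿ and U, V ∈ C are not equal up to phase, then the product UV is equal up to phase to some member of C. -/

import Mathlib

open Matrix

noncomputable section

/-- Matrices on the Hilbert space of `n` qubits, with rows and columns indexed by
bit strings `Fin n → Fin 2`. -/
abbrev QMat (n : ℕ) := Matrix (Fin n → Fin 2) (Fin n → Fin 2) ℂ

/-- The single-qubit identity. -/
def pI : Matrix (Fin 2) (Fin 2) ℂ := 1

/-- The single-qubit Pauli X. -/
def pX : Matrix (Fin 2) (Fin 2) ℂ := !![0, 1; 1, 0]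

/-- The single-qubit Pauli Y. -/
def pY : Matrix (Fin 2) (Fin 2) ℂ := !![0, -Complex.I; Complex.I, 0]

/-- The single-qubit Pauli Z. -/
def pZ : Matrix (Fin 2) (Fin 2) ℂ := !![1, 0; 0, -1]

/-- The `n`-fold Kronecker product `W 0 ⊗ ⋯ ⊗ W (n-1)`, realized on indices
`Fin n → Fin 2`. -/
def kron (n : ℕ) (W : Fin n → Matrix (Fin 2) (Fin 2) ℂ) : QMat n :=
  fun v w => ∏ j, W j (v j) (w j)

/-- `M` is an `n`-qubit Pauli operator: an `n`-fold Kronecker product of matrices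
from `{I₂, X, Y, Z}`. -/
def IsPauliOp (n : ℕ) (M : QMat n) : Prop :=
  ∃ W : Fin n → Matrix (Fin 2) (Fin 2) ℂ,
    (∀ j, W j = pI ∨ W j = pX ∨ W j = pY ∨ W j = pZ) ∧ M = kron n W

/-- Two matrices are equal up to phase if one is a nonzero scalar multiple of the other. -/
def PhaseEq {m : Type*} (A B : Matrix m m ℂ) : Prop := ∃ c : ℂ, c ≠ 0 ∧ A = c • B

/-- A maximal commuting Pauli class in dimension `d = 2 ^ n`: a set of `d - 1`
pairwise commuting non-identity `n`-qubit Pauli operators, pairwise distinct up to phase. -/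
def IsMaxClass (n : ℕ) (C : Set (QMat n)) : Prop :=
  C.Finite ∧ C.ncard = 2 ^ n - 1 ∧
  (∀ U ∈ C, IsPauliOp n U ∧ U ≠ 1) ∧
  (∀ U ∈ C, ∀ V ∈ C, U * V = V * U) ∧
  (∀ U ∈ C, ∀ V ∈ C, U ≠ V → ¬ PhaseEq U V)

/-- Two classes are disjoint if no member of one is equal up to phase to a member of the other. -/
def ClassDisjoint {n : ℕ} (C D : Set (QMat n)) : Prop :=
  ∀ U ∈ C, ∀ V ∈ D, ¬ PhaseEq U V

/-- Two classes are equal up to phase (as sets of operators). -/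
def ClassPhaseEq {n : ℕ} (C D : Set (QMat n)) : Prop :=
  (∀ U ∈ C, ∃ V ∈ D, PhaseEq U V) ∧ (∀ V ∈ D, ∃ U ∈ C, PhaseEq U V)

/-- The standard Hermitian inner product on `ι → ℂ` (conjugate-linear in the first slot). -/
def cinner {ι : Type*} [Fintype ι] (x y : ι → ℂ) : ℂ :=
  ∑ k, (starRingEnd ℂ) (x k) * y k

/-!
A Pauli operator is, up to phase, `X^a Z^b` for a label `(a, b) ∈ 𝔽₂ⁿ × 𝔽₂ⁿ`: multiplying
operators adds labels, and two of them commute exactly when their labels are orthogonal for the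
symplectic form of `𝔽₂²ⁿ`. The labels of a maximal class together with `0` are `2ⁿ` pairwise
orthogonal vectors. Their span is totally isotropic, so it has dimension at most `n` and at most
`2ⁿ` elements; hence the labels already form a subspace, and the label of `UV` is that of a
member.
-/

namespace LinearMap.BilinForm

open Module Submodule

variable {K V : Type*} [Field K] [AddCommGroup V] [Module K V] {B : LinearMap.BilinForm K V}

lemma span_le_orthogonal_span {S : Set V} (hS : ∀ x ∈ S, ∀ y ∈ S, B x y = 0) :
    span K S ≤ B.orthogonal (span K S) :=
  span_le.2 fun y hy =>
    show span K S ≤ LinearMap.ker (B.flip y) from span_le.2 fun x hx => hS x hx y hy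

lemma two_mul_finrank_le_of_le_orthogonal [FiniteDimensional K V] (hB : B.Nondegenerate)
    {W : Submodule K V} (hW : W ≤ B.orthogonal W) : 2 * finrank K W ≤ finrank K V := by
  have hle := finrank_mono hW
  rw [finrank_orthogonal hB] at hle
  have hW_le := W.finrank_le
  omega

lemma coe_span_eq_of_ncard_eq [Finite K] [FiniteDimensional K V] (hB : B.Nondegenerate)
    {m : ℕ} (hV : finrank K V = 2 * m) {S : Set V} (hS : ∀ x ∈ S, ∀ y ∈ S, B x y = 0)
    (hcard : S.ncard = Nat.card K ^ m) : (span K S : Set V) = S := by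
  have : Finite V := Module.finite_of_finite K
  have hrank := two_mul_finrank_le_of_le_orthogonal hB (span_le_orthogonal_span hS)
  refine (Set.eq_of_subset_of_ncard_le subset_span ?_ (Set.toFinite _)).symm
  rw [hcard, ← Nat.card_coe_set_eq, SetLike.coe_sort_coe,
    Module.natCard_eq_pow_finrank (K := K)]
  exact Nat.pow_le_pow_right Nat.card_pos (by omega)

end LinearMap.BilinForm

namespace PhaseEq

variable {m : Type*} {A B P Q : Matrix m m ℂ}

lemma refl (A : Matrix m m ℂ) : PhaseEq A A := ⟨1, one_ne_zero, (one_smul ℂ A).symm⟩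

lemma symm : PhaseEq A B → PhaseEq B A := fun ⟨c, hc, h⟩ =>
  ⟨c⁻¹, inv_ne_zero hc, by rw [h, smul_smul, inv_mul_cancel₀ hc, one_smul]⟩

lemma trans : PhaseEq A B → PhaseEq B P → PhaseEq A P := fun ⟨c, hc, h⟩ ⟨c', hc', h'⟩ =>
  ⟨c * c', mul_ne_zero hc hc', by rw [h, h', smul_smul]⟩

lemma mul [Fintype m] : PhaseEq A P → PhaseEq B Q → PhaseEq (A * B) (P * Q) :=
  fun ⟨a, ha, h⟩ ⟨b, hb, h'⟩ => ⟨a * b, mul_ne_zero ha hb, by rw [h, h', smul_mul_smul_comm]⟩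

lemma commute_iff [Fintype m] : PhaseEq A P → PhaseEq B Q → (Commute A B ↔ Commute P Q) :=
  fun ⟨a, ha, h⟩ ⟨b, hb, h'⟩ => by
    rw [h, h', Commute.smul_left_iff₀ ha, Commute.smul_right_iff₀ hb]

end PhaseEq

lemma kron_mul (n : ℕ) (W W' : Fin n → Matrix (Fin 2) (Fin 2) ℂ) :
    kron n W * kron n W' = kron n (fun j => W j * W' j) := by
  ext v w
  simp only [kron, Matrix.mul_apply]
  rw [Finset.prod_univ_sum, Fintype.piFinset_univ]
  exact Finset.sum_congr rfl fun u _ => Finset.prod_mul_distrib.symm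

lemma kron_smul (n : ℕ) (c : Fin n → ℂ) (W : Fin n → Matrix (Fin 2) (Fin 2) ℂ) :
    kron n (fun j => c j • W j) = (∏ j, c j) • kron n W := by
  ext v w
  simp [kron, Finset.prod_mul_distrib]

lemma kron_one (n : ℕ) : kron n (fun _ => 1) = 1 := by
  ext v w
  simp only [kron, Matrix.one_apply, Finset.prod_boole, Finset.mem_univ, true_implies, funext_iff]

lemma kron_phaseEq {n : ℕ} {W W' : Fin n → Matrix (Fin 2) (Fin 2) ℂ}
    (h : ∀ j, PhaseEq (W j) (W' j)) : PhaseEq (kron n W) (kron n W') := by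
  choose c hc hW using h
  exact ⟨∏ j, c j, Finset.prod_ne_zero_iff.2 fun j _ => hc j, by rw [← kron_smul, ← funext hW]⟩

namespace Pauli

lemma zmod_two_eq_zero_or_eq_one (x : ZMod 2) : x = 0 ∨ x = 1 := by revert x; decide

def sign (x : ZMod 2) : ℂ := (-1) ^ x.val

lemma sign_add (x y : ZMod 2) : sign (x + y) = sign x * sign y := by
  rw [sign, ZMod.val_add, ← neg_one_pow_eq_pow_mod_two, pow_add]; rfl

lemma sign_ne_zero (x : ZMod 2) : sign x ≠ 0 := pow_ne_zero _ (by norm_num)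

lemma sign_injective : Function.Injective sign := by
  intro x y
  rcases zmod_two_eq_zero_or_eq_one x with rfl | rfl <;>
    rcases zmod_two_eq_zero_or_eq_one y with rfl | rfl <;>
    norm_num [sign, ZMod.val_one]

lemma sign_sum {ι : Type*} (s : Finset ι) (f : ι → ZMod 2) :
    sign (∑ i ∈ s, f i) = ∏ i ∈ s, sign (f i) := by
  classical
  induction s using Finset.induction_on with
  | empty => rfl
  | insert i s hi ih => rw [Finset.sum_insert hi, Finset.prod_insert hi, sign_add, ih]

def qubitPauli (a b : ZMod 2) : Matrix (Fin 2) (Fin 2) ℂ := pX ^ a.val * pZ ^ b.val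

lemma qubitPauli_mul (a b a' b' : ZMod 2) :
    qubitPauli a b * qubitPauli a' b' = sign (b * a') • qubitPauli (a + a') (b + b') := by
  rcases zmod_two_eq_zero_or_eq_one a with rfl | rfl <;>
    rcases zmod_two_eq_zero_or_eq_one b with rfl | rfl <;>
    rcases zmod_two_eq_zero_or_eq_one a' with rfl | rfl <;>
    rcases zmod_two_eq_zero_or_eq_one b' with rfl | rfl <;>
    ext i j <;> fin_cases i <;> fin_cases j <;>
    simp [qubitPauli, sign, ZModModule.add_self, ZMod.val_one, pX, pZ, Matrix.mul_apply, Fin.sum_univ_two]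

lemma exists_phaseEq_qubitPauli {W : Matrix (Fin 2) (Fin 2) ℂ}
    (hW : W = pI ∨ W = pX ∨ W = pY ∨ W = pZ) :
    ∃ a b, PhaseEq W (qubitPauli a b) ∧ (a = 0 → b = 0 → W = 1) := by
  rcases hW with rfl | rfl | rfl | rfl
  · exact ⟨0, 0, by simpa [qubitPauli, pI] using PhaseEq.refl (1 : Matrix (Fin 2) (Fin 2) ℂ),
      fun _ _ => rfl⟩
  · exact ⟨1, 0, by simpa [qubitPauli, ZMod.val_one] using PhaseEq.refl pX, by simp⟩
  · refine ⟨1, 1, ⟨Complex.I, Complex.I_ne_zero, ?_⟩, by simp⟩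
    ext i j; fin_cases i <;> fin_cases j <;>
      simp [qubitPauli, ZMod.val_one, pX, pY, pZ]
  · exact ⟨0, 1, by simpa [qubitPauli, ZMod.val_one] using PhaseEq.refl pZ, by simp⟩

abbrev Label (n : ℕ) := (Fin n → ZMod 2) × (Fin n → ZMod 2)

def pauli (n : ℕ) (p : Label n) : QMat n := kron n fun j => qubitPauli (p.1 j) (p.2 j)

lemma pauli_zero (n : ℕ) : pauli n 0 = 1 := by
  simpa [pauli, qubitPauli] using kron_one n

lemma pauli_mul {n : ℕ} (p q : Label n) :
    pauli n p * pauli n q = sign (p.2 ⬝ᵥ q.1) • pauli n (p + q) := by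
  simp only [pauli, kron_mul, qubitPauli_mul, kron_smul, dotProduct, sign_sum]
  rfl

lemma pauli_ne_zero {n : ℕ} (p : Label n) : pauli n p ≠ 0 := by
  intro h
  have := pauli_mul p p
  rw [h, zero_mul, ZModModule.add_self, pauli_zero, eq_comm, smul_eq_zero] at this
  exact this.elim (sign_ne_zero _) one_ne_zero

lemma _root_.IsPauliOp.exists_phaseEq_pauli {n : ℕ} {M : QMat n} (hM : IsPauliOp n M)
    (h1 : M ≠ 1) : ∃ p ≠ 0, PhaseEq M (pauli n p) := by
  obtain ⟨W, hW, rfl⟩ := hM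
  choose a b hab hone using fun j => exists_phaseEq_qubitPauli (hW j)
  refine ⟨(a, b), fun hp => h1 ?_, kron_phaseEq hab⟩
  rw [Prod.mk_eq_zero] at hp
  rw [← kron_one]
  exact congrArg (kron n) (funext fun j => hone j (congrFun hp.1 j) (congrFun hp.2 j))

lemma phaseEq_pauli_mul {n : ℕ} (p q : Label n) :
    PhaseEq (pauli n p * pauli n q) (pauli n (p + q)) :=
  ⟨_, sign_ne_zero _, pauli_mul p q⟩

def symp (n : ℕ) : LinearMap.BilinForm (ZMod 2) (Label n) :=
  LinearMap.mk₂ (ZMod 2) (fun p q => p.2 ⬝ᵥ q.1 + q.2 ⬝ᵥ p.1)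
    (fun p p' q => by simp only [Prod.fst_add, Prod.snd_add, add_dotProduct, dotProduct_add]; abel)
    (fun c p q => by simp only [Prod.smul_fst, Prod.smul_snd, smul_dotProduct, dotProduct_smul,
      smul_eq_mul, mul_add])
    (fun p q q' => by simp only [Prod.fst_add, Prod.snd_add, add_dotProduct, dotProduct_add]; abel)
    (fun c p q => by simp only [Prod.smul_fst, Prod.smul_snd, smul_dotProduct, dotProduct_smul,
      smul_eq_mul, mul_add])

lemma symp_apply {n : ℕ} (p q : Label n) : symp n p q = p.2 ⬝ᵥ q.1 + q.2 ⬝ᵥ p.1 := rfl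

lemma symp_comm {n : ℕ} (p q : Label n) : symp n p q = symp n q p := add_comm _ _

lemma symp_nondegenerate (n : ℕ) : (symp n).Nondegenerate := by
  have hleft : (symp n).SeparatingLeft := by
    intro p hp
    ext k
    · simpa [symp_apply] using hp (0, Pi.single k 1)
    · simpa [symp_apply] using hp (Pi.single k 1, 0)
  exact ⟨hleft, fun q hq => hleft q fun p => symp_comm q p ▸ hq p⟩

lemma commute_pauli_iff {n : ℕ} (p q : Label n) :
    Commute (pauli n p) (pauli n q) ↔ symp n p q = 0 := by
  rw [commute_iff_eq, pauli_mul, pauli_mul, add_comm q p,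
    (smul_left_injective ℂ (pauli_ne_zero (p + q))).eq_iff, sign_injective.eq_iff, symp_apply,
    ← ZModModule.sub_eq_add, sub_eq_zero]

lemma add_mem_of_symp_eq_zero {n : ℕ} {S : Set (Label n)}
    (hS : ∀ x ∈ S, ∀ y ∈ S, symp n x y = 0) (hcard : S.ncard = 2 ^ n) {x y : Label n}
    (hx : x ∈ S) (hy : y ∈ S) : x + y ∈ S := by
  have hrank : Module.finrank (ZMod 2) (Label n) = 2 * n := by
    rw [Module.finrank_prod, Module.finrank_fin_fun]; ring
  rw [← Nat.card_zmod 2] at hcard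
  rw [← LinearMap.BilinForm.coe_span_eq_of_ncard_eq (symp_nondegenerate n) hrank hS hcard]
  exact add_mem (Submodule.subset_span hx) (Submodule.subset_span hy)

end Pauli

open Pauli

/-- A maximal commuting Pauli class is closed under multiplication up to
phase. -/
theorem maxClass_mul_closed (n : ℕ) (C : Set (QMat n)) (hC : IsMaxClass n C)
    (U V : QMat n) (hU : U ∈ C) (hV : V ∈ C) (h : ¬ PhaseEq U V) :
    ∃ W ∈ C, PhaseEq (U * V) W := by
  obtain ⟨hfin, hcard, hpauli, hcomm, hdist⟩ := hC
  choose! g hg0 hg using fun T hT => (hpauli T hT).1.exists_phaseEq_pauli (hpauli T hT).2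
  have hg_inj : Set.InjOn g C := fun T hT T' hT' hgT => by_contra fun hne =>
    hdist T hT T' hT' hne ((hg T hT).trans (hgT ▸ (hg T' hT').symm))
  set S : Set (Label n) := insert 0 (g '' C)
  have hS_card : S.ncard = 2 ^ n := by
    have h0 : (0 : Label n) ∉ g '' C := fun ⟨T, hT, hT0⟩ ↦ hg0 T hT hT0
    rw [Set.ncard_insert_of_notMem h0 (hfin.image g), hg_inj.ncard_image, hcard,
      Nat.sub_add_cancel Nat.one_le_two_pow]
  have hS_symp : ∀ x ∈ S, ∀ y ∈ S, symp n x y = 0 := by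
    rintro _ (rfl | ⟨T, hT, rfl⟩) _ (rfl | ⟨T', hT', rfl⟩)
    any_goals simp only [map_zero, LinearMap.zero_apply]
    exact (commute_pauli_iff _ _).1 (((hg T hT).commute_iff (hg T' hT')).1 (hcomm T hT T' hT'))
  obtain hUV | ⟨W, hW, hgW⟩ := add_mem_of_symp_eq_zero hS_symp hS_card
    (Set.mem_insert_of_mem _ ⟨U, hU, rfl⟩) (Set.mem_insert_of_mem _ ⟨V, hV, rfl⟩)
  · rw [← ZModModule.sub_eq_add, sub_eq_zero] at hUV
    exact absurd (hg_inj hU hV hUV ▸ PhaseEq.refl U) h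
  · exact ⟨W, hW, ((hg U hU).mul (hg V hV)).trans
      ((phaseEq_pauli_mul _ _).trans (hgW ▸ (hg W hW).symm))⟩
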